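/- arXiv:2011.00201 — 5 statements merged into one kernel-verified Lean document; each statement's English description precedes it below -/
import Mathlib

section
/- Let I ⊂ ℝ be a finite interval with |I| = 1 and k : I × I → ℝ measurable with 0 < k₀ ≤ k(ξ,η) ≤ k₁. Let μ ∈ ℂ with |μ| ≥ 1 and let φ : I → ℂ be bounded measurable with μ φ(ξ) = ∫_I (k(ξ,η)/k̄(ξ)) φ(η) dη for all ξ ∈ I, where k̄(ξ) = ∫_I k(ξ,η) dη. If φ is not almost everywhere zero, then |φ(ξ)| = sup_I |φ| for almost every ξ ∈ I. -/
/-!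
The normalized kernel `w(ξ, η) = k(ξ, η) / k̄(ξ)` satisfies `∫ w(ξ, ·) = 1` and `w ≥ k₀ / k₁`.
With `M = sup |φ|`, the eigenvalue equation and `|μ| ≥ 1` give `|φ(ξ)| ≤ ∫ w(ξ, η) |φ(η)| dη`,
hence `M - |φ(ξ)| ≥ ∫ w(ξ, η) (M - |φ(η)|) dη ≥ (k₀ / k₁) ∫ (M - |φ|)`.
The infimum over `ξ` of the left side is `0`, so the nonnegative function `M - |φ|` has
integral zero and vanishes almost everywhere.
-/

open MeasureTheory Set

variable {α : Type*} [MeasurableSpace α] {ν : Measure α}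

theorem norm_le_integral_mul_norm_of_mul_eq_integral {𝕜 : Type*} [RCLike 𝕜] {w : α → ℝ}
    {f : α → 𝕜} {μ z : 𝕜} (hμ : 1 ≤ ‖μ‖) (hw : ∀ᵐ y ∂ν, 0 ≤ w y)
    (hz : μ * z = ∫ y, (w y : 𝕜) * f y ∂ν) :
    ‖z‖ ≤ ∫ y, w y * ‖f y‖ ∂ν :=
  calc ‖z‖ ≤ ‖μ‖ * ‖z‖ := le_mul_of_one_le_left (norm_nonneg _) hμ
    _ = ‖∫ y, (w y : 𝕜) * f y ∂ν‖ := by rw [← norm_mul, hz]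
    _ ≤ ∫ y, ‖(w y : 𝕜) * f y‖ ∂ν := norm_integral_le_integral_norm _
    _ = ∫ y, w y * ‖f y‖ ∂ν := integral_congr_ae <| hw.mono fun y hy => by
      simp only [norm_mul, RCLike.norm_ofReal, abs_of_nonneg hy]

theorem mul_integral_sub_le_sub_integral_mul [IsFiniteMeasure ν] {w g : α → ℝ} {c M : ℝ}
    (hw_int : Integrable w ν) (hw_one : ∫ y, w y ∂ν = 1) (hcw : ∀ᵐ y ∂ν, c ≤ w y)
    (hg_int : Integrable g ν) (hwg_int : Integrable (fun y => w y * g y) ν)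
    (hgM : ∀ᵐ y ∂ν, g y ≤ M) :
    c * ∫ y, (M - g y) ∂ν ≤ M - ∫ y, w y * g y ∂ν :=
  calc c * ∫ y, (M - g y) ∂ν = ∫ y, c * (M - g y) ∂ν := (integral_const_mul _ _).symm
    _ ≤ ∫ y, (w y * M - w y * g y) ∂ν := by
      refine integral_mono_ae (((integrable_const M).sub hg_int).const_mul c)
        ((hw_int.mul_const M).sub hwg_int) ?_
      filter_upwards [hcw, hgM] with y hcy hgy
      rw [← mul_sub]
      exact mul_le_mul_of_nonneg_right hcy (sub_nonneg.2 hgy)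
    _ = M - ∫ y, w y * g y ∂ν := by
      rw [integral_sub (hw_int.mul_const M) hwg_int, integral_mul_const, hw_one, one_mul]

theorem mul_integral_sub_le_sub_integral_div_integral_mul [IsProbabilityMeasure ν]
    {κ g : α → ℝ} {k₀ k₁ M : ℝ} (hk₀ : 0 < k₀) (hκm : AEStronglyMeasurable κ ν)
    (hκ : ∀ᵐ y ∂ν, κ y ∈ Icc k₀ k₁) (hg_int : Integrable g ν) (hgM : ∀ᵐ y ∂ν, g y ≤ M) :
    k₀ / k₁ * ∫ y, (M - g y) ∂ν ≤ M - ∫ y, κ y / (∫ y', κ y' ∂ν) * g y ∂ν := by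
  have hκ_abs : ∀ᵐ y ∂ν, ‖κ y‖ ≤ k₁ := hκ.mono fun y hy => by
    rw [Real.norm_of_nonneg (hk₀.le.trans hy.1)]; exact hy.2
  have hκ_int : Integrable κ ν := .of_bound hκm k₁ hκ_abs
  obtain ⟨hκ₀, hκ₁⟩ : ∫ y, κ y ∂ν ∈ Icc k₀ k₁ :=
    (convex_Icc k₀ k₁).integral_mem isClosed_Icc hκ hκ_int
  have hκ_pos : 0 < ∫ y, κ y ∂ν := hk₀.trans_le hκ₀
  refine mul_integral_sub_le_sub_integral_mul (hκ_int.div_const _) ?_ ?_ hg_int ?_ hgM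
  · rw [integral_div, div_self hκ_pos.ne']
  · exact hκ.mono fun y hy => div_le_div₀ (hk₀.le.trans hy.1) hy.1 hκ_pos hκ₁
  · refine hg_int.bdd_mul (hκ_int.div_const _).aestronglyMeasurable (c := k₁ / k₀)
      (hκ.mono fun y hy => ?_)
    rw [Real.norm_of_nonneg (div_nonneg (hk₀.le.trans hy.1) hκ_pos.le)]
    exact div_le_div₀ (hk₀.le.trans (hy.1.trans hy.2)) hy.2 hk₀ hκ₀

theorem ae_eq_sSup_of_mul_integral_sub_le [IsFiniteMeasure ν] {s : Set α} {g : α → ℝ} {c : ℝ}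
    (hc : 0 < c) (hs : s.Nonempty) (hs_ae : ∀ᵐ x ∂ν, x ∈ s) (hbdd : BddAbove (g '' s))
    (hg_int : Integrable g ν)
    (h : ∀ x ∈ s, c * ∫ y, (sSup (g '' s) - g y) ∂ν ≤ sSup (g '' s) - g x) :
    ∀ᵐ x ∂ν, g x = sSup (g '' s) := by
  set M := sSup (g '' s)
  have hgap_nonneg : ∀ᵐ x ∂ν, 0 ≤ M - g x :=
    hs_ae.mono fun x hx => sub_nonneg.2 (le_csSup hbdd (mem_image_of_mem g hx))
  have hgap_int : Integrable (fun x => M - g x) ν := (integrable_const M).sub hg_int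
  have hc_mul : c * ∫ y, (M - g y) ∂ν ≤ c * 0 := by
    refine le_of_forall_pos_lt_add fun ε hε => ?_
    obtain ⟨_, ⟨x, hx, rfl⟩, hMx⟩ := exists_lt_of_lt_csSup (hs.image g) (sub_lt_self M hε)
    linarith [h x hx]
  have hgap_zero : ∫ y, (M - g y) ∂ν = 0 :=
    le_antisymm (le_of_mul_le_mul_left hc_mul hc) (integral_nonneg_of_ae hgap_nonneg)
  filter_upwards [(integral_eq_zero_iff_of_nonneg_ae hgap_nonneg hgap_int).1 hgap_zero] with x hx
  exact (sub_eq_zero.1 hx).symm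

theorem stmt1_general (I : Set ℝ) (hI : MeasurableSet I) (hvol : volume I = 1)
    (k : ℝ → ℝ → ℝ) (k₀ k₁ : ℝ) (hk₀ : 0 < k₀) (hk01 : k₀ < k₁)
    (hmeas : Measurable (Function.uncurry k))
    (hbound : ∀ ξ ∈ I, ∀ η ∈ I, k₀ ≤ k ξ η ∧ k ξ η ≤ k₁)
    (μ : ℂ) (hμ : 1 ≤ ‖μ‖)
    (φ : ℝ → ℂ) (hφm : Measurable φ)
    (C : ℝ) (hφb : ∀ ξ ∈ I, ‖φ ξ‖ ≤ C)
    (heig : ∀ ξ ∈ I,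
      μ * φ ξ = ∫ η in I, (↑(k ξ η / ∫ η' in I, k ξ η') : ℂ) * φ η) :
    ∀ᵐ ξ ∂(volume.restrict I),
      ‖φ ξ‖ = sSup ((fun ξ => ‖φ ξ‖) '' I) := by
  have : IsProbabilityMeasure (volume.restrict I) := ⟨by rw [Measure.restrict_apply_univ, hvol]⟩
  have hI_ne : I.Nonempty := nonempty_of_measure_ne_zero (μ := volume) (by simp [hvol])
  have hbdd : BddAbove ((fun ξ => ‖φ ξ‖) '' I) := ⟨C, forall_mem_image.2 hφb⟩
  have hφ_int : Integrable (fun η => ‖φ η‖) (volume.restrict I) :=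
    .of_bound hφm.norm.aestronglyMeasurable C (ae_restrict_of_forall_mem hI fun η hη => by
      rw [norm_norm]; exact hφb η hη)
  refine ae_eq_sSup_of_mul_integral_sub_le (div_pos hk₀ (hk₀.trans hk01)) hI_ne
    (ae_restrict_mem hI) hbdd hφ_int fun ξ hξ => ?_
  have hkξ : ∀ᵐ η ∂(volume.restrict I), k ξ η ∈ Icc k₀ k₁ :=
    ae_restrict_of_forall_mem hI (hbound ξ hξ)
  have hw_nonneg : ∀ᵐ η ∂(volume.restrict I), 0 ≤ k ξ η / ∫ η' in I, k ξ η' :=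
    hkξ.mono fun η hη => div_nonneg (hk₀.le.trans hη.1)
      (integral_nonneg_of_ae (hkξ.mono fun η' hη' => hk₀.le.trans hη'.1))
  have hsub_mean := norm_le_integral_mul_norm_of_mul_eq_integral hμ hw_nonneg (heig ξ hξ)
  have hgap_bound := mul_integral_sub_le_sub_integral_div_integral_mul hk₀
    hmeas.of_uncurry_left.aestronglyMeasurable hkξ hφ_int
    (ae_restrict_of_forall_mem hI fun η hη => le_csSup hbdd (mem_image_of_mem _ hη))
  linarith

/-- A bounded measurable eigenfunction with eigenvalue of modulus ≥ 1 has
constant modulus (equal to its sup) almost everywhere. -/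
theorem stmt1 (I : Set ℝ) (hI : MeasurableSet I) (hvol : volume I = 1)
    (k : ℝ → ℝ → ℝ) (k₀ k₁ : ℝ) (hk₀ : 0 < k₀) (hk01 : k₀ < k₁)
    (hmeas : Measurable (Function.uncurry k))
    (hbound : ∀ ξ ∈ I, ∀ η ∈ I, k₀ ≤ k ξ η ∧ k ξ η ≤ k₁)
    (μ : ℂ) (hμ : 1 ≤ ‖μ‖)
    (φ : ℝ → ℂ) (hφm : Measurable φ)
    (C : ℝ) (hφb : ∀ ξ ∈ I, ‖φ ξ‖ ≤ C)
    (heig : ∀ ξ ∈ I,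
      μ * φ ξ = ∫ η in I, (↑(k ξ η / ∫ η' in I, k ξ η') : ℂ) * φ η)
    (hnz : ¬ (∀ᵐ ξ ∂(volume.restrict I), φ ξ = 0)) :
    ∀ᵐ ξ ∂(volume.restrict I),
      ‖φ ξ‖ = sSup ((fun ξ => ‖φ ξ‖) '' I) :=
  stmt1_general I hI hvol k k₀ k₁ hk₀ hk01 hmeas hbound μ hμ φ hφm C hφb heig
end

section
/- Let I ⊂ ℝ be a finite interval with |I| = 1 and k : I × I → ℝ measurable with 0 < k₀ ≤ k(ξ,η) ≤ k₁, and k̄(ξ) = ∫_I k(ξ,η) dη. If μ ∈ ℂ is an eigenvalue of the operator Λf(ξ) = ∫_I (k(ξ,η)/k̄(ξ)) f(η) dη on L²(I) with |μ| ≥ 1, then |μ| = 1. Consequently the spectral radius of Λ equals 1. -/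
/-!
Normalizing the kernel by `k̄` makes each row `k(ξ, ·)/k̄(ξ)` a probability density on `I`, so `Λ`
is a Markov operator and does not increase the essential supremum. An eigenfunction `φ` is
essentially bounded, because the normalized kernel is bounded by `k₁/k₀` and `φ ∈ L¹(I)`; then
`|μ| ‖φ‖_∞ = ‖Λφ‖_∞ ≤ ‖φ‖_∞` with `0 < ‖φ‖_∞ < ∞` forces `|μ| ≤ 1`.
-/

open MeasureTheory Filter

variable {α : Type*} [MeasurableSpace α] {ν : Measure α}
  {E : Type*} [NormedAddCommGroup E]

structure IsBoundedProbDensity (ν : Measure α) (M : ℝ) (q : α → ℝ) : Prop where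
  ae_nonneg : ∀ᵐ x ∂ν, 0 ≤ q x
  ae_le : ∀ᵐ x ∂ν, q x ≤ M
  integrable : Integrable q ν
  integral_eq_one : ∫ x, q x ∂ν = 1

theorem isBoundedProbDensity_div_integral [IsProbabilityMeasure ν] {f : α → ℝ} {k₀ k₁ : ℝ}
    (hk₀ : 0 < k₀) (hf : AEStronglyMeasurable f ν) (hbound : ∀ᵐ x ∂ν, k₀ ≤ f x ∧ f x ≤ k₁) :
    IsBoundedProbDensity ν (k₁ / k₀) (fun x => f x / ∫ y, f y ∂ν) := by
  have hint : Integrable f ν := Integrable.of_bound hf k₁ <| hbound.mono fun x hx => by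
    rw [Real.norm_of_nonneg (hk₀.le.trans hx.1)]
    exact hx.2
  have hk₀_le : k₀ ≤ ∫ y, f y ∂ν := by
    simpa using integral_mono_ae (integrable_const k₀) hint (hbound.mono fun x hx => hx.1)
  have hpos : 0 < ∫ y, f y ∂ν := hk₀.trans_le hk₀_le
  refine ⟨hbound.mono fun x hx => ?_, hbound.mono fun x hx => ?_, hint.div_const _, ?_⟩
  · exact div_nonneg (hk₀.le.trans hx.1) hpos.le
  · exact div_le_div₀ (hk₀.le.trans (hx.1.trans hx.2)) hx.2 hk₀ hk₀_le
  · rw [integral_div, div_self hpos.ne']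

theorem ae_eq_zero_of_forall_ae_norm_le {φ : α → E} {r C : ℝ} (hr : 1 < r)
    (hC : ∀ᵐ x ∂ν, ‖φ x‖ ≤ C)
    (hstep : ∀ B, (∀ᵐ x ∂ν, ‖φ x‖ ≤ B) → ∀ᵐ x ∂ν, r * ‖φ x‖ ≤ B) : φ =ᵐ[ν] 0 := by
  set S := eLpNormEssSup φ ν
  have hS : S ≠ ⊤ := (eLpNormEssSup_lt_top_of_ae_bound hC).ne
  have hle : ∀ᵐ x ∂ν, ‖φ x‖ ≤ S.toReal := ae_le_eLpNormEssSup.mono fun x hx => by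
    simpa only [toReal_enorm] using ENNReal.toReal_mono hS hx
  have hS_le : S ≤ ENNReal.ofReal (S.toReal / r) :=
    eLpNormEssSup_le_of_ae_bound <| (hstep _ hle).mono fun x hx => by
      rw [le_div_iff₀ (by linarith)]
      linarith
  have hS_le' : S.toReal ≤ S.toReal / r := by
    have h := ENNReal.toReal_mono ENNReal.ofReal_ne_top hS_le
    rwa [ENNReal.toReal_ofReal (div_nonneg ENNReal.toReal_nonneg (by linarith))] at h
  have hS_zero : S.toReal = 0 := by
    rw [le_div_iff₀ (by linarith)] at hS_le'
    nlinarith [ENNReal.toReal_nonneg (a := S)]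
  exact eLpNormEssSup_eq_zero_iff.1 (((ENNReal.toReal_eq_zero_iff _).1 hS_zero).resolve_right hS)

variable [NormedSpace ℝ E]

theorem norm_integral_smul_le_of_ae_norm_le {q : α → ℝ} {φ : α → E} {B : ℝ}
    (hq₀ : ∀ᵐ x ∂ν, 0 ≤ q x) (hq : Integrable q ν) (hq₁ : ∫ x, q x ∂ν = 1)
    (hB : ∀ᵐ x ∂ν, ‖φ x‖ ≤ B) : ‖∫ x, q x • φ x ∂ν‖ ≤ B :=
  calc ‖∫ x, q x • φ x ∂ν‖ ≤ ∫ x, ‖q x • φ x‖ ∂ν := norm_integral_le_integral_norm _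
    _ ≤ ∫ x, q x * B ∂ν := by
      refine integral_mono_of_nonneg (ae_of_all _ fun x => norm_nonneg _) (hq.mul_const B) ?_
      filter_upwards [hq₀, hB] with x hx₀ hxB
      rw [norm_smul, Real.norm_of_nonneg hx₀]
      exact mul_le_mul_of_nonneg_left hxB hx₀
    _ = B := by rw [integral_mul_const, hq₁, one_mul]

theorem norm_integral_smul_le_mul_integral_norm {q : α → ℝ} {φ : α → E} {M : ℝ}
    (hq₀ : ∀ᵐ x ∂ν, 0 ≤ q x) (hqM : ∀ᵐ x ∂ν, q x ≤ M) (hφ : Integrable φ ν) :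
    ‖∫ x, q x • φ x ∂ν‖ ≤ M * ∫ x, ‖φ x‖ ∂ν :=
  calc ‖∫ x, q x • φ x ∂ν‖ ≤ ∫ x, ‖q x • φ x‖ ∂ν := norm_integral_le_integral_norm _
    _ ≤ ∫ x, M * ‖φ x‖ ∂ν := by
      refine integral_mono_of_nonneg (ae_of_all _ fun x => norm_nonneg _) (hφ.norm.const_mul M) ?_
      filter_upwards [hq₀, hqM] with x hx₀ hxM
      rw [norm_smul, Real.norm_of_nonneg hx₀]
      exact mul_le_mul_of_nonneg_right hxM (norm_nonneg _)
    _ = M * ∫ x, ‖φ x‖ ∂ν := integral_const_mul M _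

theorem norm_eigenvalue_le_one_of_isBoundedProbDensity {𝕜 : Type*} [NormedField 𝕜]
    [NormedSpace 𝕜 E] {p : α → α → ℝ} {M : ℝ} {φ : α → E} {μ : 𝕜}
    (hp : ∀ᵐ ξ ∂ν, IsBoundedProbDensity ν M (p ξ)) (hφ : Integrable φ ν) (hnz : ¬ φ =ᵐ[ν] 0)
    (heig : ∀ᵐ ξ ∂ν, μ • φ ξ = ∫ η, p ξ η • φ η ∂ν) : ‖μ‖ ≤ 1 := by
  by_contra! hμ
  refine hnz (ae_eq_zero_of_forall_ae_norm_le hμ (C := M * ∫ x, ‖φ x‖ ∂ν) ?_ fun B hB => ?_)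
  · filter_upwards [hp, heig] with ξ hpξ hξ
    calc ‖φ ξ‖ ≤ ‖μ‖ * ‖φ ξ‖ := le_mul_of_one_le_left (norm_nonneg _) hμ.le
      _ = ‖∫ η, p ξ η • φ η ∂ν‖ := by rw [← norm_smul, hξ]
      _ ≤ _ := norm_integral_smul_le_mul_integral_norm hpξ.ae_nonneg hpξ.ae_le hφ
  · filter_upwards [hp, heig] with ξ hpξ hξ
    rw [← norm_smul, hξ]
    exact norm_integral_smul_le_of_ae_norm_le hpξ.ae_nonneg hpξ.integrable hpξ.integral_eq_one hB

theorem stmt2_general (I : Set ℝ) (hI : MeasurableSet I) (hvol : volume I = 1)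
    (k : ℝ → ℝ → ℝ) (k₀ k₁ : ℝ) (hk₀ : 0 < k₀)
    (hmeas : Measurable (Function.uncurry k))
    (hbound : ∀ ξ ∈ I, ∀ η ∈ I, k₀ ≤ k ξ η ∧ k ξ η ≤ k₁)
    (μ : ℂ) (hμ : 1 ≤ ‖μ‖)
    (φ : ℝ → ℂ) (hφ2 : MemLp φ 2 (volume.restrict I))
    (hnz : ¬ (∀ᵐ ξ ∂(volume.restrict I), φ ξ = 0))
    (heig : ∀ᵐ ξ ∂(volume.restrict I),
      μ * φ ξ = ∫ η in I, (↑(k ξ η / ∫ η' in I, k ξ η') : ℂ) * φ η) :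
    ‖μ‖ = 1 := by
  have : IsProbabilityMeasure (volume.restrict I) := ⟨by rw [Measure.restrict_apply_univ, hvol]⟩
  have hrow : ∀ ξ ∈ I, IsBoundedProbDensity (volume.restrict I) (k₁ / k₀)
      fun η => k ξ η / ∫ η' in I, k ξ η' := fun ξ hξ =>
    isBoundedProbDensity_div_integral hk₀ (hmeas.comp measurable_prodMk_left).aestronglyMeasurable
      ((ae_restrict_mem hI).mono fun η hη => hbound ξ hξ η hη)
  refine le_antisymm (norm_eigenvalue_le_one_of_isBoundedProbDensity
    ((ae_restrict_mem hI).mono hrow) (hφ2.integrable one_le_two) hnz ?_) hμ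
  filter_upwards [heig] with ξ hξ
  simpa only [Complex.real_smul, smul_eq_mul] using hξ

/-- Any eigenvalue μ of the normalized kernel operator Λ on L²(I) with |μ| ≥ 1
satisfies |μ| = 1; hence the spectral radius of Λ equals 1. -/
theorem stmt2 (I : Set ℝ) (hI : MeasurableSet I) (hvol : volume I = 1)
    (k : ℝ → ℝ → ℝ) (k₀ k₁ : ℝ) (hk₀ : 0 < k₀) (hk01 : k₀ < k₁)
    (hmeas : Measurable (Function.uncurry k))
    (hbound : ∀ ξ ∈ I, ∀ η ∈ I, k₀ ≤ k ξ η ∧ k ξ η ≤ k₁)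
    (μ : ℂ) (hμ : 1 ≤ ‖μ‖)
    (φ : ℝ → ℂ) (hφ2 : MemLp φ 2 (volume.restrict I))
    (hnz : ¬ (∀ᵐ ξ ∂(volume.restrict I), φ ξ = 0))
    (heig : ∀ᵐ ξ ∂(volume.restrict I),
      μ * φ ξ = ∫ η in I, (↑(k ξ η / ∫ η' in I, k ξ η') : ℂ) * φ η) :
    ‖μ‖ = 1 :=
  stmt2_general I hI hvol k k₀ k₁ hk₀ hmeas hbound μ hμ φ hφ2 hnz heig
end

section
/- Let I ⊂ ℝ be a finite interval with |I| = 1 and k : I × I → ℝ measurable with 0 < k₀ ≤ k(ξ,η) ≤ k₁. Let v : I → ℝ be bounded measurable with v ≥ 0, let α > 0, and suppose that α v(ξ) + ∫_I k(ξ,η)(v(ξ) − v(η)) dη ≤ 0 for all ξ ∈ I. Then v(ξ) = 0 for almost every ξ ∈ I. -/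
/-!
A maximum principle. Let `M` be the supremum of `v` on `I`. Since `0 ≤ k ≤ k₁` and `v(η) ≤ M`,
each integrand satisfies `k(ξ,η)(v(ξ) - v(η)) ≥ -k₁ (M - v(ξ))`, so the hypothesis gives
`α v(ξ) ≤ k₁ (M - v(ξ))` for every `ξ ∈ I`. Passing to the supremum in `ξ` yields `α M ≤ 0`,
hence `0 ≤ v ≤ M ≤ 0` on all of `I`.
-/

open MeasureTheory

theorem eqOn_zero_of_mul_le_mul_sSup_sub {X : Type*} {s : Set X} {v : X → ℝ} {α K : ℝ}
    (hα : 0 < α) (hK : 0 ≤ K) (hbdd : BddAbove (v '' s)) (hnn : ∀ ξ ∈ s, 0 ≤ v ξ)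
    (h : ∀ ξ ∈ s, α * v ξ ≤ K * (sSup (v '' s) - v ξ)) :
    ∀ ξ ∈ s, v ξ = 0 := by
  intro ξ hξ
  set M := sSup (v '' s)
  have hαK : 0 < α + K := by linarith
  have hsup : M ≤ K * M / (α + K) := by
    refine csSup_le ⟨v ξ, ξ, hξ, rfl⟩ ?_
    rintro _ ⟨η, hη, rfl⟩
    rw [le_div_iff₀ hαK]
    linarith [h η hη]
  have hM : M ≤ 0 := by
    rw [le_div_iff₀ hαK] at hsup
    nlinarith
  exact le_antisymm ((le_csSup hbdd ⟨ξ, hξ, rfl⟩).trans hM) (hnn ξ hξ)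

section SetIntegral

variable {X : Type*} [MeasurableSpace X] {μ : Measure X} {I : Set X}

theorem integrableOn_mul_const_sub {k w : X → ℝ} {a K C : ℝ} (hμI : μ I ≠ ⊤)
    (hk : Measurable k) (hw : Measurable w) (hI : MeasurableSet I)
    (hkb : ∀ η ∈ I, |k η| ≤ K) (hwb : ∀ η ∈ I, |w η| ≤ C) :
    IntegrableOn (fun η ↦ k η * (a - w η)) I μ := by
  refine Measure.integrableOn_of_bounded (M := K * (|a| + C)) hμI
    (hk.mul (measurable_const.sub hw)).aestronglyMeasurable ?_
  filter_upwards [ae_restrict_mem hI] with η hη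
  rw [Real.norm_eq_abs, abs_mul]
  gcongr
  · exact (abs_nonneg _).trans (hkb η hη)
  · exact hkb η hη
  · exact (abs_sub _ _).trans (by gcongr; exact hwb η hη)

theorem mul_sub_le_setIntegral_mul_const_sub {k w : X → ℝ} {a K M : ℝ}
    (hI : MeasurableSet I) (hμI : μ I = 1)
    (hint : IntegrableOn (fun η ↦ k η * (a - w η)) I μ)
    (hk : ∀ η ∈ I, 0 ≤ k η ∧ k η ≤ K) (hw : ∀ η ∈ I, w η ≤ M) (ha : a ≤ M) :
    K * (a - M) ≤ ∫ η in I, k η * (a - w η) ∂μ := by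
  have hpointwise : ∀ η ∈ I, K * (a - M) ≤ k η * (a - w η) := fun η hη ↦
    calc K * (a - M) ≤ k η * (a - M) := mul_le_mul_of_nonpos_right (hk η hη).2 (by linarith)
      _ ≤ k η * (a - w η) := by gcongr; exacts [(hk η hη).1, hw η hη]
  calc K * (a - M) = ∫ _ in I, K * (a - M) ∂μ := by simp [measureReal_def, hμI]
    _ ≤ ∫ η in I, k η * (a - w η) ∂μ :=
      setIntegral_mono_on (integrableOn_const (by simp [hμI])) hint hI hpointwise

end SetIntegral

/-- A nonnegative bounded measurable subsolution of α v + Θ v ≤ 0 vanishes a.e. -/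
theorem stmt5 (I : Set ℝ) (hI : MeasurableSet I) (hvol : volume I = 1)
    (k : ℝ → ℝ → ℝ) (k₀ k₁ : ℝ) (hk₀ : 0 < k₀) (hk01 : k₀ < k₁)
    (hmeas : Measurable (Function.uncurry k))
    (hbound : ∀ ξ ∈ I, ∀ η ∈ I, k₀ ≤ k ξ η ∧ k ξ η ≤ k₁)
    (v : ℝ → ℝ) (hvm : Measurable v) (C : ℝ) (hvb : ∀ ξ ∈ I, |v ξ| ≤ C)
    (hvnn : ∀ ξ ∈ I, 0 ≤ v ξ)
    (α : ℝ) (hα : 0 < α)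
    (hsub : ∀ ξ ∈ I, α * v ξ + (∫ η in I, k ξ η * (v ξ - v η)) ≤ 0) :
    ∀ᵐ ξ ∂(volume.restrict I), v ξ = 0 := by
  have hk : ∀ ξ ∈ I, ∀ η ∈ I, 0 ≤ k ξ η ∧ k ξ η ≤ k₁ := fun ξ hξ η hη ↦
    ⟨hk₀.le.trans (hbound ξ hξ η hη).1, (hbound ξ hξ η hη).2⟩
  have hbdd : BddAbove (v '' I) := ⟨C, by
    rintro _ ⟨ξ, hξ, rfl⟩
    exact (abs_le.mp (hvb ξ hξ)).2⟩
  have hle : ∀ η ∈ I, v η ≤ sSup (v '' I) := fun η hη ↦ le_csSup hbdd ⟨η, hη, rfl⟩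
  refine ae_restrict_of_forall_mem hI <|
    eqOn_zero_of_mul_le_mul_sSup_sub hα (hk₀.trans hk01).le hbdd hvnn fun ξ hξ ↦ ?_
  have hint : IntegrableOn (fun η ↦ k ξ η * (v ξ - v η)) I :=
    integrableOn_mul_const_sub (by simp [hvol]) hmeas.of_uncurry_left hvm hI
      (fun η hη ↦ abs_le.mpr ⟨by linarith [hk ξ hξ η hη], (hk ξ hξ η hη).2⟩) hvb
  have hlower := mul_sub_le_setIntegral_mul_const_sub hI hvol hint (hk ξ hξ) hle (hle ξ hξ)
  linarith [hsub ξ hξ]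
end

section
/- Let (X, d) be a compact metric space and u_j : X → ℝ a sequence of continuous functions uniformly bounded. Let ū(x) = lim_{r→0} sup { u_j(y) : d(x,y) ≤ r, j ≥ 1/r } be the upper half-relaxed limit. Let φ : X → ℝ be continuous, and suppose ū − φ attains a strict maximum at x̂ ∈ X, and that there exist y_j → x̂ with u_j(y_j) → ū(x̂). Let x_j be a maximum point of u_j − φ over X. Then every convergent subsequence of (x_j) converges to x̂, and along the full sequence u_j(x_j) → ū(x̂). -/
open Filter

/-- Key upper bound: along any sequence of indices tending to infinity and points
tending to `z`, the limsup of values is at most `ubar z`. -/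
lemma limsup_le_ubar {X : Type*} [MetricSpace X]
    (u : ℕ → X → ℝ) (C : ℝ) (hbd : ∀ j x, |u j x| ≤ C)
    (ubar : X → ℝ)
    (hubar : ∀ x, ubar x = ⨅ r : Set.Ioi (0 : ℝ),
      sSup ((fun p : ℕ × X => u p.1 p.2) ''
        {p : ℕ × X | dist x p.2 ≤ (r : ℝ) ∧ 1 / (r : ℝ) ≤ (p.1 : ℝ)}))
    (z : X) (σ : ℕ → ℕ) (hσ : Tendsto σ atTop atTop)
    (w : ℕ → X) (hw : Tendsto w atTop (nhds z)) :
    limsup (fun n => u (σ n) (w n)) atTop ≤ ubar z := by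
  rw [hubar z]
  have hcob : IsCoboundedUnder (· ≤ ·) atTop (fun n => u (σ n) (w n)) :=
    Filter.isCoboundedUnder_le_of_le atTop fun n => (abs_le.1 (hbd _ _)).1
  refine le_ciInf fun r => ?_
  obtain ⟨r, hr⟩ := r
  simp only [Set.mem_Ioi] at hr
  set S := ((fun p : ℕ × X => u p.1 p.2) ''
    {p : ℕ × X | dist z p.2 ≤ (r : ℝ) ∧ 1 / (r : ℝ) ≤ (p.1 : ℝ)}) with hS
  have hbdd : BddAbove S := by
    refine ⟨C, ?_⟩
    rintro _ ⟨p, _, rfl⟩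
    exact (abs_le.1 (hbd _ _)).2
  refine Filter.limsup_le_of_le hcob ?_
  have h1 : ∀ᶠ n in atTop, dist z (w n) ≤ r := by
    have := hw (Metric.closedBall_mem_nhds z hr)
    filter_upwards [this] with n hn
    rw [dist_comm]; exact hn
  have h2 : ∀ᶠ n in atTop, 1 / (r : ℝ) ≤ (σ n : ℝ) := by
    filter_upwards [hσ.eventually_ge_atTop ⌈1 / r⌉₊] with n hn
    exact (Nat.le_ceil _).trans (Nat.cast_le.2 hn)
  filter_upwards [h1, h2] with n hn1 hn2
  exact le_csSup hbdd ⟨(σ n, w n), ⟨hn1, hn2⟩, rfl⟩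

/-- Maximizer-convergence lemma for upper half-relaxed limits. -/
theorem stmt9 {X : Type*} [MetricSpace X] [CompactSpace X] [Nonempty X]
    (u : ℕ → X → ℝ) (hu : ∀ j, Continuous (u j))
    (C : ℝ) (hbd : ∀ j x, |u j x| ≤ C)
    (ubar : X → ℝ)
    (hubar : ∀ x, ubar x = ⨅ r : Set.Ioi (0 : ℝ),
      sSup ((fun p : ℕ × X => u p.1 p.2) ''
        {p : ℕ × X | dist x p.2 ≤ (r : ℝ) ∧ 1 / (r : ℝ) ≤ (p.1 : ℝ)}))
    (φ : X → ℝ) (hφ : Continuous φ)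
    (xhat : X) (hstrict : ∀ x, x ≠ xhat → ubar x - φ x < ubar xhat - φ xhat)
    (y : ℕ → X) (hy : Tendsto y atTop (nhds xhat))
    (hyu : Tendsto (fun j => u j (y j)) atTop (nhds (ubar xhat)))
    (x : ℕ → X) (hmax : ∀ j z, u j z - φ z ≤ u j (x j) - φ (x j)) :
    (∀ σ : ℕ → ℕ, StrictMono σ →
        ∀ z : X, Tendsto (fun n => x (σ n)) atTop (nhds z) → z = xhat)
    ∧ Tendsto (fun j => u j (x j)) atTop (nhds (ubar xhat)) := by
  -- lower bound function: for all j, u j (x j) ≥ u j (y j) - φ (y j) + φ (x j)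
  have hlow : ∀ j, u j (y j) - φ (y j) + φ (x j) ≤ u j (x j) := by
    intro j; have := hmax j (y j); linarith
  have claim1 : ∀ (σ : ℕ → ℕ), Tendsto σ atTop atTop →
      ∀ z, Tendsto (fun n => x (σ n)) atTop (nhds z) → z = xhat := by
    intro σ hσ z hz
    by_contra hne
    have hlt := hstrict z hne
    set a : ℕ → ℝ := fun n => u (σ n) (x (σ n)) with ha
    have hA : limsup a atTop ≤ ubar z :=
      limsup_le_ubar u C hbd ubar hubar z σ hσ _ hz
    -- lower bound tends to ubar xhat - φ xhat + φ z
    have htend : Tendsto (fun n => u (σ n) (y (σ n)) - φ (y (σ n)) + φ (x (σ n)))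
        atTop (nhds (ubar xhat - φ xhat + φ z)) :=
      ((hyu.comp hσ).sub (((hφ.tendsto xhat).comp (hy.comp hσ)))).add
        ((hφ.tendsto z).comp hz)
    have hbl : IsBoundedUnder (· ≥ ·) atTop fun n => u (σ n) (y (σ n)) - φ (y (σ n)) + φ (x (σ n)) :=
      htend.isBoundedUnder_ge
    have hcb : IsCoboundedUnder (· ≥ ·) atTop a :=
      Filter.isCoboundedUnder_ge_of_le atTop fun n => (abs_le.1 (hbd _ _)).2
    have hliminf : ubar xhat - φ xhat + φ z ≤ liminf a atTop := by
      rw [← htend.liminf_eq]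
      exact Filter.liminf_le_liminf (Eventually.of_forall fun n => hlow (σ n)) hbl hcb
    have hll : liminf a atTop ≤ limsup a atTop :=
      Filter.liminf_le_limsup
        (Filter.isBoundedUnder_of ⟨C, fun n => (abs_le.1 (hbd _ _)).2⟩)
        (Filter.isBoundedUnder_of ⟨-C, fun n => (abs_le.1 (hbd _ _)).1⟩)
    linarith
  refine ⟨fun σ hσ z hz => claim1 σ hσ.tendsto_atTop z hz, ?_⟩
  apply Filter.tendsto_of_subseq_tendsto
  intro ns hns
  obtain ⟨z, -, ms, hms, hzt⟩ := isCompact_univ.tendsto_subseq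
    (x := fun n => x (ns n)) (fun n => Set.mem_univ _)
  have hσ : Tendsto (fun n => ns (ms n)) atTop atTop := hns.comp hms.tendsto_atTop
  have hzx : z = xhat := claim1 _ hσ z hzt
  rw [hzx] at hzt
  refine ⟨ms, ?_⟩
  set a : ℕ → ℝ := fun n => u (ns (ms n)) (x (ns (ms n))) with ha
  have hA : limsup a atTop ≤ ubar xhat :=
    limsup_le_ubar u C hbd ubar hubar xhat _ hσ _ hzt
  have htend : Tendsto (fun n => u (ns (ms n)) (y (ns (ms n))) - φ (y (ns (ms n)))
      + φ (x (ns (ms n)))) atTop (nhds (ubar xhat - φ xhat + φ xhat)) :=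
    ((hyu.comp hσ).sub (((hφ.tendsto xhat).comp (hy.comp hσ)))).add
      ((hφ.tendsto xhat).comp hzt)
  have hliminf : ubar xhat ≤ liminf a atTop := by
    have : ubar xhat - φ xhat + φ xhat = ubar xhat := by ring
    rw [← this, ← htend.liminf_eq]
    exact Filter.liminf_le_liminf (Eventually.of_forall fun n => hlow (ns (ms n)))
      htend.isBoundedUnder_ge
      (Filter.isCoboundedUnder_ge_of_le atTop fun n => (abs_le.1 (hbd _ _)).2)
  exact tendsto_of_le_liminf_of_limsup_le hliminf hA
    (Filter.isBoundedUnder_of ⟨C, fun n => (abs_le.1 (hbd _ _)).2⟩)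
    (Filter.isBoundedUnder_of ⟨-C, fun n => (abs_le.1 (hbd _ _)).1⟩)
end

section
/- Let X be a compact metric space, and let u, v : X → ℝ be bounded functions with u upper semicontinuous and v lower semicontinuous. Suppose λ := sup_X (u − v) > 0. For ε > 0, let (x_ε, y_ε) ∈ X × X maximize Φ_ε(x,y) := u(x) − v(y) − d(x,y)²/(2ε). Then d(x_ε, y_ε)² ≤ 2ε (sup u + sup(−v) − λ), every subsequential limit of (x_ε, y_ε) as ε → 0 is of the form (x̂, x̂), and u(x_ε) − v(y_ε) ≥ λ. -/
open Filter Set Topology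

/-!
Testing the maximality of `(x_ε, y_ε)` against the diagonal pairs `(a, a)` shows that the
penalized maximum is at least `λ = sup (u - v)`. Since the penalty is nonnegative this gives
`u x_ε - v y_ε ≥ λ`, and bounding `u x_ε - v y_ε` by `sup u + sup (-v)` leaves room of at most
`sup u + sup (-v) - λ` for the penalty `d(x_ε, y_ε)² / 2ε`. As `ε → 0` the distances then tend
to `0`, so the two limits coincide.
-/

section PenalizedMax

variable {X : Type*} [PseudoMetricSpace X] {u v : X → ℝ} {ε : ℝ} {x₀ y₀ : X}

def IsPenalizedMax (u v : X → ℝ) (ε : ℝ) (x₀ y₀ : X) : Prop :=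
  ∀ a b : X, u a - v b - dist a b ^ 2 / (2 * ε) ≤ u x₀ - v y₀ - dist x₀ y₀ ^ 2 / (2 * ε)

theorem IsPenalizedMax.sSup_sub_le (hmax : IsPenalizedMax u v ε x₀ y₀) :
    sSup (range fun z => u z - v z) ≤ u x₀ - v y₀ - dist x₀ y₀ ^ 2 / (2 * ε) :=
  csSup_le ⟨_, x₀, rfl⟩ <| forall_mem_range.2 fun a => by simpa using hmax a a

theorem IsPenalizedMax.sSup_sub_le_sub (hmax : IsPenalizedMax u v ε x₀ y₀) (hε : 0 < ε) :
    sSup (range fun z => u z - v z) ≤ u x₀ - v y₀ := by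
  have : 0 ≤ dist x₀ y₀ ^ 2 / (2 * ε) := by positivity
  linarith [hmax.sSup_sub_le]

theorem IsPenalizedMax.dist_sq_le (hmax : IsPenalizedMax u v ε x₀ y₀) (hε : 0 < ε)
    (hu : BddAbove (range u)) (hv : BddAbove (range fun z => -v z)) :
    dist x₀ y₀ ^ 2
      ≤ 2 * ε * (sSup (range u) + sSup (range fun z => -v z) - sSup (range fun z => u z - v z)) := by
  have hsup := hmax.sSup_sub_le
  have hux : u x₀ ≤ sSup (range u) := le_csSup hu ⟨x₀, rfl⟩
  have hvy : -v y₀ ≤ sSup (range fun z => -v z) := le_csSup hv ⟨y₀, rfl⟩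
  have hpenalty : dist x₀ y₀ ^ 2 / (2 * ε) ≤ sSup (range u) + sSup (range fun z => -v z)
      - sSup (range fun z => u z - v z) := by linarith
  rwa [div_le_iff₀' (by positivity)] at hpenalty

end PenalizedMax

theorem eq_of_tendsto_of_dist_sq_le {ι X : Type*} [MetricSpace X] {l : Filter ι} [l.NeBot]
    {f g : ι → X} {c : ι → ℝ} {a b : X} (hf : Tendsto f l (𝓝 a)) (hg : Tendsto g l (𝓝 b))
    (hc : Tendsto c l (𝓝 0)) (hfg : ∀ i, dist (f i) (g i) ^ 2 ≤ c i) : a = b := by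
  have hab : dist a b ^ 2 ≤ 0 := le_of_tendsto_of_tendsto' ((hf.dist hg).pow 2) hc hfg
  exact dist_eq_zero.1 ((sq_nonpos_iff _).1 hab)

theorem stmt15_general {X : Type*} [MetricSpace X]
    (u v : X → ℝ)
    (hub : ∃ C, ∀ x, |u x| ≤ C) (hvb : ∃ C, ∀ x, |v x| ≤ C)
    (lam : ℝ) (hlam : lam = sSup (Set.range fun x => u x - v x))
    (x y : ℝ → X)
    (hmax : ∀ ε > (0 : ℝ), ∀ a b : X,
      u a - v b - dist a b ^ 2 / (2 * ε)
        ≤ u (x ε) - v (y ε) - dist (x ε) (y ε) ^ 2 / (2 * ε)) :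
    (∀ ε > (0 : ℝ),
      dist (x ε) (y ε) ^ 2
          ≤ 2 * ε * (sSup (Set.range u) + sSup (Set.range fun z => -v z) - lam)
        ∧ lam ≤ u (x ε) - v (y ε))
    ∧ ∀ εn : ℕ → ℝ, (∀ n, 0 < εn n) → Tendsto εn atTop (nhds 0) →
        ∀ a b : X, Tendsto (fun n => x (εn n)) atTop (nhds a) →
          Tendsto (fun n => y (εn n)) atTop (nhds b) → a = b := by
  obtain ⟨Cu, hCu⟩ := hub
  obtain ⟨Cv, hCv⟩ := hvb
  have hbu : BddAbove (range u) := ⟨Cu, forall_mem_range.2 fun z => (abs_le.1 (hCu z)).2⟩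
  have hbv : BddAbove (range fun z => -v z) :=
    ⟨Cv, forall_mem_range.2 fun z => neg_le.1 (abs_le.1 (hCv z)).1⟩
  subst hlam
  have hest : ∀ ε > (0 : ℝ), dist (x ε) (y ε) ^ 2
      ≤ 2 * ε * (sSup (range u) + sSup (range fun z => -v z) - sSup (range fun z => u z - v z))
      ∧ sSup (range fun z => u z - v z) ≤ u (x ε) - v (y ε) := fun ε hε =>
    ⟨IsPenalizedMax.dist_sq_le (hmax ε hε) hε hbu hbv,
      IsPenalizedMax.sSup_sub_le_sub (hmax ε hε) hε⟩
  refine ⟨hest, fun εn hεn hεn0 a b ha hb => eq_of_tendsto_of_dist_sq_le ha hb ?_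
    fun n => (hest (εn n) (hεn n)).1⟩
  simpa using (hεn0.const_mul 2).mul_const _

/-- Standard doubling-of-variables estimate. -/
theorem stmt15 {X : Type*} [MetricSpace X] [CompactSpace X] [Nonempty X]
    (u v : X → ℝ) (hu : UpperSemicontinuous u) (hv : LowerSemicontinuous v)
    (hub : ∃ C, ∀ x, |u x| ≤ C) (hvb : ∃ C, ∀ x, |v x| ≤ C)
    (lam : ℝ) (hlam : lam = sSup (Set.range fun x => u x - v x)) (hpos : 0 < lam)
    (x y : ℝ → X)
    (hmax : ∀ ε > (0 : ℝ), ∀ a b : X,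
      u a - v b - dist a b ^ 2 / (2 * ε)
        ≤ u (x ε) - v (y ε) - dist (x ε) (y ε) ^ 2 / (2 * ε)) :
    (∀ ε > (0 : ℝ),
      dist (x ε) (y ε) ^ 2
          ≤ 2 * ε * (sSup (Set.range u) + sSup (Set.range fun z => -v z) - lam)
        ∧ lam ≤ u (x ε) - v (y ε))
    ∧ ∀ εn : ℕ → ℝ, (∀ n, 0 < εn n) → Tendsto εn atTop (nhds 0) →
        ∀ a b : X, Tendsto (fun n => x (εn n)) atTop (nhds a) →
          Tendsto (fun n => y (εn n)) atTop (nhds b) → a = b :=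
  stmt15_general u v hub hvb lam hlam x y hmax
end
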